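/- Let α : [0, log 2] → [0,1] be the inverse of the strictly increasing function t ↦ ψ(t)/(1+t) on [0,1]. Then for every t ∈ (0, log 2], 4α(t)/(t·(1 + α(t))) = (4/t) · (1/2 − √(H⁻¹(log 2 − t)·(1 − H⁻¹(log 2 − t)))). -/

import Mathlib

/-!
With `s = √a`, the point `u = (1 - s)² / (2(1 + a))` and its complement `1 - u = (1 + s)² / (2(1 + a))`
turn the binary entropy `H(u)` into `log 2 - ψ(a)/(1 + a)`, and `u ∈ [0, 1/2]`. So for `a = α(t)`
injectivity of `H` on `[0, 1/2]` gives `H⁻¹(log 2 - t) = u`, and then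
`u(1 - u) = ((1 - a) / (2(1 + a)))²`, whence `1/2 - √(u(1 - u)) = a / (1 + a)`.
-/

/-- `ψ(t) = (1/2)(1−√t)² log((1−√t)²) + (1/2)(1+√t)² log((1+√t)²) − (1+t) log(1+t)`
(note `Real.log 0 = 0`). -/
noncomputable def psi (t : ℝ) : ℝ :=
  (1 / 2) * (1 - Real.sqrt t) ^ 2 * Real.log ((1 - Real.sqrt t) ^ 2) +
    (1 / 2) * (1 + Real.sqrt t) ^ 2 * Real.log ((1 + Real.sqrt t) ^ 2) -
    (1 + t) * Real.log (1 + t)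

open Real Set

lemma psi_one : psi 1 = 2 * log 2 := by
  rw [psi, sqrt_one]
  norm_num
  rw [show (4 : ℝ) = 2 ^ 2 by norm_num, log_pow]
  ring

lemma one_sub_sqrt_sq_add_one_add_sqrt_sq {a : ℝ} (ha : 0 ≤ a) :
    (1 - √a) ^ 2 + (1 + √a) ^ 2 = 2 * (1 + a) := by
  nlinarith [sq_sqrt ha]

lemma binEntropy_one_sub_sqrt_sq_div {a : ℝ} (ha : 0 ≤ a) :
    binEntropy ((1 - √a) ^ 2 / (2 * (1 + a))) = log 2 - psi a / (1 + a) := by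
  have h1a : (0 : ℝ) < 1 + a := by linarith
  rcases eq_or_ne (√a) 1 with hs | hs
  · obtain rfl : a = 1 := by rw [← sq_sqrt ha, hs, one_pow]
    rw [hs, psi_one]
    norm_num
  have hu : (1 - √a) ^ 2 ≠ 0 := pow_ne_zero 2 (sub_ne_zero.mpr hs.symm)
  have hv : (1 + √a) ^ 2 ≠ 0 := by positivity
  have h1u : 1 - (1 - √a) ^ 2 / (2 * (1 + a)) = (1 + √a) ^ 2 / (2 * (1 + a)) := by
    field_simp
    linarith [one_sub_sqrt_sq_add_one_add_sqrt_sq ha]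
  rw [binEntropy, h1u, log_inv, log_inv, log_div hu (by positivity), log_div hv (by positivity),
    log_mul two_ne_zero h1a.ne', psi]
  field_simp
  linear_combination (log 2 + log (1 + a)) * one_sub_sqrt_sq_add_one_add_sqrt_sq ha

lemma one_sub_sqrt_sq_div_mem_Icc {a : ℝ} (ha : 0 ≤ a) :
    (1 - √a) ^ 2 / (2 * (1 + a)) ∈ Icc 0 2⁻¹ := by
  refine ⟨by positivity, ?_⟩
  rw [div_le_iff₀ (by positivity)]
  nlinarith [sq_sqrt ha, sqrt_nonneg a]

lemma one_sub_sqrt_sq_div_mul_one_sub {a : ℝ} (ha : 0 ≤ a) :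
    (1 - √a) ^ 2 / (2 * (1 + a)) * (1 - (1 - √a) ^ 2 / (2 * (1 + a))) =
      ((1 - a) / (2 * (1 + a))) ^ 2 := by
  obtain ⟨s, hs, rfl⟩ : ∃ s, 0 ≤ s ∧ a = s ^ 2 := ⟨√a, sqrt_nonneg a, (sq_sqrt ha).symm⟩
  rw [sqrt_sq hs]
  field_simp
  ring

theorem cOf_explicit_general (α : ℝ → ℝ)
    (hαmem : ∀ y ∈ Set.Icc (0 : ℝ) (Real.log 2), α y ∈ Set.Icc (0 : ℝ) 1)
    (hαright : ∀ y ∈ Set.Icc (0 : ℝ) (Real.log 2), psi (α y) / (1 + α y) = y)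
    (Hinv : ℝ → ℝ)
    (hHinv : ∀ y ∈ Set.Icc (0 : ℝ) (Real.log 2),
      Hinv y ∈ Set.Icc (0 : ℝ) (1 / 2) ∧
        -(Hinv y) * Real.log (Hinv y) - (1 - Hinv y) * Real.log (1 - Hinv y) = y) :
    ∀ t ∈ Set.Ioc (0 : ℝ) (Real.log 2),
      4 * α t / (t * (1 + α t)) =
        (4 / t) *
          (1 / 2 - Real.sqrt (Hinv (Real.log 2 - t) * (1 - Hinv (Real.log 2 - t)))) := by
  rintro t ⟨ht0, htle⟩
  have htIcc : t ∈ Icc 0 (log 2) := ⟨ht0.le, htle⟩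
  obtain ⟨ha0, ha1⟩ := hαmem t htIcc
  obtain ⟨⟨hx0, hx1⟩, hxH⟩ := hHinv (log 2 - t) ⟨by linarith, by linarith⟩
  have hHinv_eq : Hinv (log 2 - t) = (1 - √(α t)) ^ 2 / (2 * (1 + α t)) := by
    refine binEntropy_strictMonoOn.injOn ⟨hx0, by linarith⟩ (one_sub_sqrt_sq_div_mem_Icc ha0) ?_
    rw [binEntropy_one_sub_sqrt_sq_div ha0, hαright t htIcc,
      binEntropy_eq_negMulLog_add_negMulLog_one_sub, negMulLog, negMulLog]
    linear_combination hxH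
  rw [hHinv_eq, one_sub_sqrt_sq_div_mul_one_sub ha0, sqrt_sq (by positivity)]
  field_simp
  ring

/-- Let `α : [0, log 2] → [0,1]` be the inverse of `t ↦ ψ(t)/(1+t)` and let
`H⁻¹ : [0, log 2] → [0, 1/2]` be the inverse of the entropy function
`H(x) = −x log x − (1−x) log(1−x)` on `[0, 1/2]`. Then for every
`t ∈ (0, log 2]`,
`4α(t)/(t(1+α(t))) = (4/t)·(1/2 − √(H⁻¹(log 2 − t)(1 − H⁻¹(log 2 − t))))`. -/
theorem cOf_explicit (α : ℝ → ℝ)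
    (hαmem : ∀ y ∈ Set.Icc (0 : ℝ) (Real.log 2), α y ∈ Set.Icc (0 : ℝ) 1)
    (hαright : ∀ y ∈ Set.Icc (0 : ℝ) (Real.log 2), psi (α y) / (1 + α y) = y)
    (hαleft : ∀ t ∈ Set.Icc (0 : ℝ) 1, α (psi t / (1 + t)) = t)
    (Hinv : ℝ → ℝ)
    (hHinv : ∀ y ∈ Set.Icc (0 : ℝ) (Real.log 2),
      Hinv y ∈ Set.Icc (0 : ℝ) (1 / 2) ∧
        -(Hinv y) * Real.log (Hinv y) - (1 - Hinv y) * Real.log (1 - Hinv y) = y) :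
    ∀ t ∈ Set.Ioc (0 : ℝ) (Real.log 2),
      4 * α t / (t * (1 + α t)) =
        (4 / t) *
          (1 / 2 - Real.sqrt (Hinv (Real.log 2 - t) * (1 - Hinv (Real.log 2 - t)))) :=
  cOf_explicit_general α hαmem hαright Hinv hHinv
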